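/- Let O be an order in an imaginary quadratic field K of discriminant D < 0, and let Q = ax²+bxy+cy² be a primitive positive-definite form of discriminant D with gcd(a,N)=1. Then Za + Z·aτ_Q is a proper O-ideal of norm a, where τ_Q = (-b+√D)/(2a); in particular O = Z + Z·aτ_Q. -/

import Mathlib

/-!
Put `w = a τ_Q = (-b + √D)/2`, a root of `X² + bX + ac`. Since `D ≡ b (mod 2)`, `O = ℤ + ℤw`
and `L = ℤa + ℤw`; as `w ∉ ℝ`, the pair `1, w` is a `ℤ`-basis, so `L` has index `|a|` in `O`.
The relation `w² = -bw - ac` gives `O L ⊆ L`. Conversely, if `α L ⊆ L`, write `α a = pa + qw`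
and `α w = p'a + q'w`; comparing coefficients in `(α a) w = (α w) a` gives `a ∣ qb` and
`a ∣ qc`, hence `a ∣ q` by primitivity, and `α = p + (q/a) w ∈ O`.
-/

/-- The square root `√D ∈ ℂ` of a negative integer `D`. -/
noncomputable def sqrtD (D : ℤ) : ℂ := Complex.I * Real.sqrt (-(D : ℝ))

/-- The order `O = ℤ + ℤ·(D+√D)/2` of discriminant `D`, as a `ℤ`-submodule of `ℂ`. -/
noncomputable def ordO (D : ℤ) : Submodule ℤ ℂ :=
  Submodule.span ℤ ({1, ((D : ℂ) + sqrtD D) / 2} : Set ℂ)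

/-- The root `τ_Q = (-b + √D)/(2a)` of `Q(x,1) = 0` in the upper half-plane. -/
noncomputable def tauQ (D a b : ℤ) : ℂ := (-(b : ℂ) + sqrtD D) / (2 * a)

/-- The lattice `ℤa + ℤ·aτ_Q`. -/
noncomputable def latL (D a b : ℤ) : Submodule ℤ ℂ :=
  Submodule.span ℤ ({(a : ℂ), (a : ℂ) * tauQ D a b} : Set ℂ)

open Submodule

theorem Int.dvd_of_dvd_mul_of_gcd_gcd_eq_one {a b c q : ℤ} (h : Int.gcd (Int.gcd a b) c = 1)
    (hb : a ∣ q * b) (hc : a ∣ q * c) : a ∣ q := by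
  obtain ⟨s, hs⟩ := hb
  obtain ⟨t, ht⟩ := hc
  obtain ⟨u, v, huv⟩ := Int.isCoprime_iff_gcd_eq_one.mpr h
  have hab := Int.gcd_eq_gcd_ab a b
  exact ⟨u * (q * a.gcdA b + s * a.gcdB b) + v * t, by
    linear_combination (-q) * huv + u * q * hab + u * a.gcdB b * hs + v * ht⟩

theorem mem_span_pair_iff_exists_int {u w z : ℂ} :
    z ∈ span ℤ {u, w} ↔ ∃ m n : ℤ, m * u + n * w = z := by
  simp only [mem_span_pair, zsmul_eq_mul]

section Lattice

variable {w : ℂ}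

theorem eq_and_eq_of_intCast_add_mul_eq (hw : w.im ≠ 0) {m n m' n' : ℤ}
    (h : m + n * w = m' + n' * w) : m = m' ∧ n = n' := by
  have him := congrArg Complex.im h
  have hre := congrArg Complex.re h
  simp only [Complex.add_im, Complex.add_re, Complex.mul_im, Complex.mul_re,
    Complex.intCast_re, Complex.intCast_im] at him hre
  have hn : n = n' := by
    exact_mod_cast mul_right_cancel₀ hw (by linarith : (n : ℝ) * w.im = n' * w.im)
  subst hn
  exact ⟨by exact_mod_cast (by linarith : (m : ℝ) = m'), rfl⟩

noncomputable def intPairHom (w : ℂ) : ℤ × ℤ →+ ℂ :=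
  ((Int.castAddHom ℂ).comp (AddMonoidHom.fst ℤ ℤ)) +
    ((AddMonoidHom.mulRight w).comp ((Int.castAddHom ℂ).comp (AddMonoidHom.snd ℤ ℤ)))

theorem intPairHom_apply (p : ℤ × ℤ) : intPairHom w p = p.1 + p.2 * w := rfl

theorem intPairHom_injective (hw : w.im ≠ 0) : Function.Injective (intPairHom w) :=
  fun _ _ h => Prod.ext_iff.mpr (eq_and_eq_of_intCast_add_mul_eq hw h)

theorem span_intCast_pair_toAddSubgroup (a : ℤ) :
    (span ℤ {(a : ℂ), w}).toAddSubgroup =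
      ((AddSubgroup.zmultiples a).prod ⊤).map (intPairHom w) := by
  ext z
  simp only [mem_toAddSubgroup, mem_span_pair_iff_exists_int, AddSubgroup.mem_map,
    AddSubgroup.mem_prod, Int.mem_zmultiples_iff, AddSubgroup.mem_top, and_true,
    intPairHom_apply, Prod.exists]
  constructor
  · rintro ⟨m, n, rfl⟩
    exact ⟨a * m, n, dvd_mul_right a m, by push_cast; ring⟩
  · rintro ⟨_, n, ⟨m, rfl⟩, rfl⟩
    exact ⟨m, n, by push_cast; ring⟩

theorem relIndex_span_intCast_pair (hw : w.im ≠ 0) (a : ℤ) :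
    (span ℤ {(a : ℂ), w}).toAddSubgroup.relIndex (span ℤ {1, w}).toAddSubgroup = a.natAbs := by
  rw [span_intCast_pair_toAddSubgroup, ← Int.cast_one, span_intCast_pair_toAddSubgroup,
    AddSubgroup.relIndex_map_map_of_injective _ _ (intPairHom_injective hw)]
  simp [AddSubgroup.relIndex_top_right, AddSubgroup.index_prod]

variable {a b c : ℤ}

theorem mul_mem_span_intCast_pair (hw : w ^ 2 + b * w + a * c = 0) {α x : ℂ}
    (hα : α ∈ span ℤ {1, w}) (hx : x ∈ span ℤ {(a : ℂ), w}) : α * x ∈ span ℤ {(a : ℂ), w} := by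
  obtain ⟨p, q, rfl⟩ := mem_span_pair_iff_exists_int.mp hα
  obtain ⟨u, v, rfl⟩ := mem_span_pair_iff_exists_int.mp hx
  refine mem_span_pair_iff_exists_int.mpr ⟨p * u - q * v * c, p * v + q * u * a - q * v * b, ?_⟩
  push_cast
  linear_combination (-(q * v) : ℂ) * hw

theorem mem_span_one_of_mul_mem (hw : w.im ≠ 0) (hwq : w ^ 2 + b * w + a * c = 0)
    (hprim : Int.gcd (Int.gcd a b) c = 1) (ha : a ≠ 0) {α : ℂ}
    (hα : ∀ x ∈ span ℤ {(a : ℂ), w}, α * x ∈ span ℤ {(a : ℂ), w}) : α ∈ span ℤ {1, w} := by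
  obtain ⟨p, q, hαa⟩ :=
    mem_span_pair_iff_exists_int.mp (hα _ (subset_span (Set.mem_insert _ _)))
  obtain ⟨p', q', hαw⟩ :=
    mem_span_pair_iff_exists_int.mp (hα _ (subset_span (Set.mem_insert_of_mem _ rfl)))
  -- `(α a) w = (α w) a`, expanded in the basis `1, w`
  have hcoeff : ((-(q * a * c) : ℤ) : ℂ) + ((a * p - q * b : ℤ) : ℂ) * w
      = ((p' * a * a : ℤ) : ℂ) + ((q' * a : ℤ) : ℂ) * w := by
    push_cast
    linear_combination (w : ℂ) * hαa - (a : ℂ) * hαw - (q : ℂ) * hwq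
  obtain ⟨hc, hb⟩ := eq_and_eq_of_intCast_add_mul_eq hw hcoeff
  have hqc : a ∣ q * c := ⟨-p', mul_right_cancel₀ ha (by linear_combination -hc)⟩
  obtain ⟨q₀, rfl⟩ :=
    Int.dvd_of_dvd_mul_of_gcd_gcd_eq_one hprim ⟨p - q', by linear_combination -hb⟩ hqc
  refine mem_span_pair_iff_exists_int.mpr ⟨p, q₀, mul_right_cancel₀ (Int.cast_ne_zero.mpr ha) ?_⟩
  push_cast at hαa
  linear_combination hαa

end Lattice

noncomputable def wQ (D b : ℤ) : ℂ := (-(b : ℂ) + sqrtD D) / 2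

theorem mul_tauQ {D a b : ℤ} (ha : (a : ℂ) ≠ 0) : a * tauQ D a b = wQ D b := by
  rw [tauQ, wQ]
  field_simp

theorem sqrtD_sq {D : ℤ} (hD : D < 0) : sqrtD D ^ 2 = D := by
  have hD' : (0 : ℝ) ≤ -(D : ℝ) := by exact_mod_cast (neg_nonneg.mpr hD.le)
  rw [sqrtD, mul_pow, Complex.I_sq, ← Complex.ofReal_pow, Real.sq_sqrt hD']
  push_cast
  ring

theorem wQ_im_ne_zero {D : ℤ} (hD : D < 0) (b : ℤ) : (wQ D b).im ≠ 0 := by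
  have hD' : (0 : ℝ) < -(D : ℝ) := by exact_mod_cast (neg_pos.mpr hD)
  simpa [wQ, sqrtD] using (Real.sqrt_pos.mpr hD').ne'

theorem wQ_sq_add_mul_add {D a b c : ℤ} (hD : D < 0) (hdisc : b ^ 2 - 4 * a * c = D) :
    wQ D b ^ 2 + b * wQ D b + a * c = 0 := by
  have hdisc' : (b : ℂ) ^ 2 - 4 * a * c = D := by exact_mod_cast hdisc
  rw [wQ]
  linear_combination (1 / 4 : ℂ) * sqrtD_sq hD - (1 / 4 : ℂ) * hdisc'

theorem ordO_eq_span_wQ {D b : ℤ} (h : Even (D + b)) : ordO D = span ℤ {1, wQ D b} := by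
  obtain ⟨k, hk⟩ := h
  have hk' : (D : ℂ) + sqrtD D = 2 * (wQ D b + k) := by
    have hkC : (D : ℂ) + b = k + k := by exact_mod_cast hk
    rw [wQ]
    linear_combination hkC
  ext z
  rw [ordO, hk', mul_div_cancel_left₀ _ two_ne_zero, mem_span_pair_iff_exists_int,
    mem_span_pair_iff_exists_int]
  constructor
  · rintro ⟨m, n, rfl⟩
    exact ⟨m + n * k, n, by push_cast; ring⟩
  · rintro ⟨m, n, rfl⟩
    exact ⟨m - n * k, n, by push_cast; ring⟩

theorem stmt_7_general (D : ℤ) (a b c : ℤ) (hD : D < 0)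
    (hdisc : b ^ 2 - 4 * a * c = D) (ha : 0 < a)
    (hprim : Int.gcd (Int.gcd a b) c = 1) :
    Submodule.span ℤ ({1, (a : ℂ) * tauQ D a b} : Set ℂ) = ordO D ∧
    (∀ α ∈ ordO D, ∀ x ∈ latL D a b, α * x ∈ latL D a b) ∧
    {α : ℂ | ∀ x ∈ latL D a b, α * x ∈ latL D a b} = (ordO D : Set ℂ) ∧
    (latL D a b).toAddSubgroup.relIndex (ordO D).toAddSubgroup = a.toNat := by
  have ha0 : (a : ℂ) ≠ 0 := by exact_mod_cast ha.ne'
  have hw := wQ_im_ne_zero hD b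
  have hwq := wQ_sq_add_mul_add hD hdisc
  have hO : ordO D = span ℤ {1, wQ D b} := by
    refine ordO_eq_span_wQ ?_
    subst hdisc
    simp [Int.even_add, Int.even_sub, parity_simps, show Even (4 : ℤ) from ⟨2, rfl⟩]
  have hL : latL D a b = span ℤ {(a : ℂ), wQ D b} := by rw [latL, mul_tauQ ha0]
  have hmul : ∀ α ∈ ordO D, ∀ x ∈ latL D a b, α * x ∈ latL D a b := by
    rw [hO, hL]
    exact fun α hα x hx => mul_mem_span_intCast_pair hwq hα hx
  refine ⟨by rw [mul_tauQ ha0, hO], hmul, Set.Subset.antisymm (fun α hα => ?_) hmul, ?_⟩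
  · rw [hL] at hα
    rw [SetLike.mem_coe, hO]
    exact mem_span_one_of_mul_mem hw hwq hprim ha.ne' hα
  · rw [hO, hL, relIndex_span_intCast_pair hw]
    omega

/-- Let `O` be the order of discriminant `D < 0` and let `Q = ax² + bxy + cy²` be primitive
positive-definite of discriminant `D` with `gcd(a,N) = 1`. Then `ℤa + ℤaτ_Q` is a proper
`O`-ideal of norm `a`, and in particular `O = ℤ + ℤ·aτ_Q`. -/
theorem stmt_7 (D : ℤ) (N : ℕ) (a b c : ℤ) (hD : D < 0)
    (hdisc : b ^ 2 - 4 * a * c = D) (ha : 0 < a)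
    (hprim : Int.gcd (Int.gcd a b) c = 1) (haN : Int.gcd a N = 1) :
    Submodule.span ℤ ({1, (a : ℂ) * tauQ D a b} : Set ℂ) = ordO D ∧
    (∀ α ∈ ordO D, ∀ x ∈ latL D a b, α * x ∈ latL D a b) ∧
    {α : ℂ | ∀ x ∈ latL D a b, α * x ∈ latL D a b} = (ordO D : Set ℂ) ∧
    (latL D a b).toAddSubgroup.relIndex (ordO D).toAddSubgroup = a.toNat :=
  stmt_7_general D a b c hD hdisc ha hprim
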